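/- arXiv:2206.15091 — 2 statements merged into one kernel-verified Lean document; each statement's English description precedes it below -/
import Mathlib

section
/- If H is obtained from a graph G by deleting an edge, then stcw(H) ≤ stcw(G). -/
open scoped Classical

noncomputable section

namespace PaperSTCW

open SimpleGraph Finset

/-- Degree of a vertex in a multiset of edges over `Sym2 W`, loops counting twice. -/
def mdeg {W : Type} (E : Multiset (Sym2 W)) (v : W) : ℕ :=
  (E.map fun e => if e = Sym2.diag v then 2 else if v ∈ e then 1 else 0).sum

/-- Remove the edges incident to `v` and, if `lift = true` and `v` was incident to exactly
two non-loop edges, add the lifted edge between their other endpoints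
(this is the edge replacement performed when suppressing a degree-2 vertex). -/
def nextE {W : Type} (lift : Bool) (v : W) (E : Multiset (Sym2 W)) : Multiset (Sym2 W) :=
  E.filter (fun e => v ∉ e) +
    (if lift then
      (match (E.filter (fun e => v ∈ e)).toList.map
          (fun e => if hm : v ∈ e then Sym2.Mem.other hm else v) with
        | [a, b] => ({s(a, b)} : Multiset (Sym2 W))
        | _ => 0)
     else 0)

/-- Exhaustively delete (and, when `lift = true`, suppress) vertices outside `X` of degree
at most `d` from the multigraph with vertex set `S` and edge multiset `E`;
returns the surviving vertex set. -/
def reduce {W : Type} (X : Finset W) (d : ℕ) (lift : Bool)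
    (S : Finset W) (E : Multiset (Sym2 W)) : Finset W :=
  if h : ∃ v, v ∈ S ∧ v ∉ X ∧ mdeg E v ≤ d then
    reduce X d lift (S.erase h.choose) (nextE lift h.choose E)
  else S
termination_by S.card
decreasing_by exact Finset.card_erase_lt_of_mem h.choose_spec.1

/-- A tree-cut decomposition of `G`: a rooted tree together with a near-partition of the
vertices of `G` into bags (each vertex lies in exactly one bag; bags may be empty). -/
structure TCD {V : Type} [Fintype V] (G : SimpleGraph V) where
  n : ℕ
  T : SimpleGraph (Fin n)
  tree : T.IsTree
  root : Fin n
  bag : Fin n → Finset V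
  partition : ∀ v : V, ∃! t, v ∈ bag t

variable {V : Type} [Fintype V] {G : SimpleGraph V}

/-- The set of nodes in the subtree rooted at `t` (those nodes all of whose walks
from the root pass through `t`). -/
def TCD.desc (D : TCD G) (t : Fin D.n) : Set (Fin D.n) :=
  {s | ∀ p : D.T.Walk D.root s, t ∈ p.support}

/-- The union of the bags of the subtree rooted at `t`. -/
def TCD.Y (D : TCD G) (t : Fin D.n) : Finset V :=
  Finset.univ.filter fun v => ∃ s, s ∈ D.desc t ∧ v ∈ D.bag s

/-- Adhesion of a node: the number of edges of `G` with exactly one endpoint in `Y t`. -/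
def TCD.adh (D : TCD G) (t : Fin D.n) : ℕ :=
  ((Finset.univ : Finset (Sym2 V)).filter fun e =>
    e ∈ G.edgeSet ∧ ∃ a b, e = s(a, b) ∧ a ∈ D.Y t ∧ b ∉ D.Y t).card

/-- The connected components of `T - t`. -/
def TCD.Cmp (D : TCD G) (t : Fin D.n) : Type :=
  (SimpleGraph.induce {s | s ≠ t} D.T).ConnectedComponent

instance (D : TCD G) (t : Fin D.n) : Fintype (D.Cmp t) := by
  unfold TCD.Cmp; infer_instance

/-- The consolidation map of the torso at `t`: vertices of the bag of `t` are kept,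
all vertices in the bags of a fixed connected component of `T - t` are consolidated
into a single vertex. -/
def TCD.toTorso (D : TCD G) (t : Fin D.n) (v : V) : V ⊕ D.Cmp t :=
  if h : ∃ s, s ≠ t ∧ v ∈ D.bag s then
    Sum.inr ((SimpleGraph.induce {s | s ≠ t} D.T).connectedComponentMk
      ⟨h.choose, h.choose_spec.1⟩)
  else Sum.inl v

/-- Vertex set of the torso at `t`. -/
def TCD.torsoS (D : TCD G) (t : Fin D.n) : Finset (V ⊕ D.Cmp t) :=
  ((D.bag t).image Sum.inl) ∪ (Finset.univ.image Sum.inr)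

/-- Edge multiset of the torso at `t` (consolidation keeps multiplicities and drops loops). -/
def TCD.torsoE (D : TCD G) (t : Fin D.n) : Multiset (Sym2 (V ⊕ D.Cmp t)) :=
  (((Finset.univ : Finset (Sym2 V)).filter fun e => e ∈ G.edgeSet).val.map
      (Sym2.map (D.toTorso t))).filter fun e => ¬ e.IsDiag

/-- Torso-size: the order of the 3-center of the torso at `t`, obtained by exhaustively
suppressing vertices outside the bag of degree at most 2. -/
def TCD.tor (D : TCD G) (t : Fin D.n) : ℕ :=
  (reduce ((D.bag t).image Sum.inl) 2 true (D.torsoS t) (D.torsoE t)).card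

/-- The order of the 2-center of the torso at `t`, obtained by exhaustively deleting
vertices outside the bag of degree at most 1. -/
def TCD.tor2 (D : TCD G) (t : Fin D.n) : ℕ :=
  (reduce ((D.bag t).image Sum.inl) 1 false (D.torsoS t) (D.torsoE t)).card

/-- The order of the 1-center of the torso at `t`, obtained by deleting isolated
vertices outside the bag. -/
def TCD.tor1 (D : TCD G) (t : Fin D.n) : ℕ :=
  (reduce ((D.bag t).image Sum.inl) 0 false (D.torsoS t) (D.torsoE t)).card

/-- Width of a tree-cut decomposition. -/
def TCD.width (D : TCD G) : ℕ := Finset.univ.sup fun t => max (D.adh t) (D.tor t)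

/-- Slim width of a tree-cut decomposition. -/
def TCD.slimWidth (D : TCD G) : ℕ := Finset.univ.sup fun t => max (D.adh t) (D.tor2 t)

/-- 0-width of a tree-cut decomposition. -/
def TCD.zeroWidth (D : TCD G) : ℕ := Finset.univ.sup fun t => max (D.adh t) (D.tor1 t)

/-- Tree-cut width. -/
def tcw {V : Type} [Fintype V] (G : SimpleGraph V) : ℕ :=
  sInf {k | ∃ D : TCD G, D.width ≤ k}

/-- Slim tree-cut width. -/
def stcw {V : Type} [Fintype V] (G : SimpleGraph V) : ℕ :=
  sInf {k | ∃ D : TCD G, D.slimWidth ≤ k}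

/-- 0-tree-cut width. -/
def tcw0 {V : Type} [Fintype V] (G : SimpleGraph V) : ℕ :=
  sInf {k | ∃ D : TCD G, D.zeroWidth ≤ k}


/-! ### Bundled finite graphs and weak immersions -/

structure FG where
  V : Type
  [fin : Fintype V]
  G : SimpleGraph V

attribute [instance] FG.fin

/-- One step of obtaining a graph from another: an isomorphic copy, deleting an edge,
deleting a vertex, or lifting a pair of incident edges `(x,y), (y,z)` (deleting them
and adding the edge `(x,z)`). `ImmStep B A` means `B` is obtained from `A`. -/
inductive ImmStep : FG → FG → Prop
  | iso (A B : FG) : (Nonempty (B.G ≃g A.G)) → ImmStep B A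
  | delEdge (A : FG) (e : Sym2 A.V) (he : e ∈ A.G.edgeSet) :
      ImmStep (FG.mk A.V (A.G.deleteEdges {e})) A
  | delVertex (A : FG) (v : A.V) :
      ImmStep (FG.mk {w : A.V // w ≠ v} (SimpleGraph.induce {w : A.V | w ≠ v} A.G)) A
  | lift (A : FG) (x y z : A.V) (hxy : A.G.Adj x y) (hyz : A.G.Adj y z) (hxz : x ≠ z) :
      ImmStep (FG.mk A.V (SimpleGraph.fromEdgeSet
        ((A.G.edgeSet \ {s(x, y), s(y, z)}) ∪ {s(x, z)}))) A

/-- `Immersion H G` : `G` contains `H` as a weak immersion, i.e. `H` can be obtained from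
`G` by a sequence of edge deletions, vertex deletions and liftings. -/
def Immersion (H G : FG) : Prop := Relation.ReflTransGen ImmStep H G

/-- `H` consists of `m` cycles intersecting in one vertex and otherwise pairwise
vertex-disjoint. -/
def IsFlower (m : ℕ) {W : Type} [Fintype W] (H : SimpleGraph W) : Prop :=
  H.Connected ∧ ∃ c : W, H.degree c = 2 * m ∧ ∀ v : W, v ≠ c → H.degree v = 2

/-- `H` consists of `m` paths with the same two endpoints which are otherwise pairwise
vertex-disjoint. -/
def IsTheta (m : ℕ) {W : Type} [Fintype W] (H : SimpleGraph W) : Prop :=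
  H.Connected ∧ ∃ x y : W, x ≠ y ∧ H.degree x = m ∧ H.degree y = m ∧
    (∀ v : W, v ≠ x → v ≠ y → H.degree v = 2) ∧
    (SimpleGraph.induce {v : W | v ≠ x} H).IsAcyclic ∧
    (SimpleGraph.induce {v : W | v ≠ y} H).IsAcyclic

/-- The star `K_{1,r}`. -/
def star (r : ℕ) : SimpleGraph (Fin 1 ⊕ Fin r) := completeBipartiteGraph (Fin 1) (Fin r)

/-- The windmill `W_r`: `r` triangles sharing one vertex, otherwise vertex-disjoint. -/
def windmill (r : ℕ) : SimpleGraph (Option (Fin r × Fin 2)) :=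
  SimpleGraph.fromRel (fun x y =>
    x = none ∨ ∃ (i : Fin r) (a b : Fin 2), x = some (i, a) ∧ y = some (i, b))

/-- `G` is the `k`-edge sum `G₁ ⊕ₖ G₂` at vertices `v₁, v₂` of degree `k`. -/
def IsEdgeSum {V₁ V₂ : Type} [Fintype V₁] [Fintype V₂] (k : ℕ)
    (G₁ : SimpleGraph V₁) (G₂ : SimpleGraph V₂) (v₁ : V₁) (v₂ : V₂)
    (G : SimpleGraph ({x : V₁ // x ≠ v₁} ⊕ {y : V₂ // y ≠ v₂})) : Prop :=
  G₁.degree v₁ = k ∧ G₂.degree v₂ = k ∧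
  ∃ π : V₁ → V₂, Set.BijOn π (G₁.neighborSet v₁) (G₂.neighborSet v₂) ∧
    (∀ a b : {x : V₁ // x ≠ v₁}, G.Adj (Sum.inl a) (Sum.inl b) ↔ G₁.Adj a b) ∧
    (∀ a b : {y : V₂ // y ≠ v₂}, G.Adj (Sum.inr a) (Sum.inr b) ↔ G₂.Adj a b) ∧
    (∀ (a : {x : V₁ // x ≠ v₁}) (b : {y : V₂ // y ≠ v₂}),
      G.Adj (Sum.inl a) (Sum.inr b) ↔ (G₁.Adj v₁ a ∧ π (a : V₁) = (b : V₂)))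

/-! ### Treewidth and maximum degree -/

/-- A tree decomposition of `G`. -/
structure TreeDecomp {V : Type} [Fintype V] (G : SimpleGraph V) where
  n : ℕ
  T : SimpleGraph (Fin n)
  tree : T.IsTree
  bag : Fin n → Finset V
  cover_v : ∀ v : V, ∃ t, v ∈ bag t
  cover_e : ∀ u v : V, G.Adj u v → ∃ t, u ∈ bag t ∧ v ∈ bag t
  coherent : ∀ v : V, (SimpleGraph.induce {t : Fin n | v ∈ bag t} T).Connected

/-- Width of a tree decomposition: maximum bag size minus one. -/
def TreeDecomp.width (D : TreeDecomp G) : ℕ :=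
  (Finset.univ.sup fun t => (D.bag t).card) - 1

/-- Treewidth. -/
def tw {V : Type} [Fintype V] (G : SimpleGraph V) : ℕ :=
  sInf {w | ∃ D : TreeDecomp G, D.width ≤ w}

/-- Maximum degree. -/
def maxDeg {V : Type} [Fintype V] (G : SimpleGraph V) : ℕ :=
  Finset.univ.sup fun v => G.degree v

/-! ### Edge-cut width, super edge-cut width, feedback edge number -/

/-- `T` is a maximal spanning forest of `G`. -/
def IsMSF {V : Type} (G T : SimpleGraph V) : Prop :=
  T ≤ G ∧ T.IsAcyclic ∧ ∀ u v : V, G.Adj u v → T.Reachable u v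

/-- The size of the local feedback edge set at `v`: edges of `G` outside `T` whose unique
`T`-path between their endpoints contains `v`. -/
def elocCard {V : Type} [Fintype V] (G T : SimpleGraph V) (v : V) : ℕ :=
  ((Finset.univ : Finset (Sym2 V)).filter fun e =>
    e ∈ G.edgeSet ∧ e ∉ T.edgeSet ∧
      ∃ a b : V, e = s(a, b) ∧ ∃ p : T.Walk a b, p.IsPath ∧ v ∈ p.support).card

/-- Edge-cut width of a pair `(G, T)`. -/
def ecwPair {V : Type} [Fintype V] (G T : SimpleGraph V) : ℕ :=
  1 + Finset.univ.sup fun v => elocCard G T v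

/-- Edge-cut width. -/
def ecw {V : Type} [Fintype V] (G : SimpleGraph V) : ℕ :=
  sInf {k | ∃ T : SimpleGraph V, IsMSF G T ∧ ecwPair G T ≤ k}

/-- Super edge-cut width: minimum edge-cut width over all supergraphs of `G`. -/
def secw {V : Type} [Fintype V] (G : SimpleGraph V) : ℕ :=
  sInf {k | ∃ (W : Type) (fW : Fintype W) (H : SimpleGraph W) (ι : V ↪ W),
    (∀ u v : V, G.Adj u v → H.Adj (ι u) (ι v)) ∧
    ∃ T : SimpleGraph W, IsMSF H T ∧ @ecwPair W fW H T ≤ k}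

/-- Feedback edge number: minimum number of edges whose deletion makes `G` a forest. -/
def fen {V : Type} [Fintype V] (G : SimpleGraph V) : ℕ :=
  sInf {m | ∃ F : Finset (Sym2 V), ↑F ⊆ G.edgeSet ∧ F.card = m ∧
    (G.deleteEdges ↑F).IsAcyclic}

/-! ### Nice decompositions -/

/-- The children of `t` in the rooted tree of `D`. -/
def TCD.children (D : TCD G) (t : Fin D.n) : Finset (Fin D.n) :=
  Finset.univ.filter fun s => D.T.Adj t s ∧ s ∈ D.desc t

/-- The neighborhood of a vertex set `S` in `G`. -/
def nbhd {V : Type} [Fintype V] (G : SimpleGraph V) (S : Finset V) : Finset V :=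
  Finset.univ.filter fun v => v ∉ S ∧ ∃ u ∈ S, G.Adj u v

/-- A non-root node is thin if its adhesion is at most 2. -/
def TCD.IsThin (D : TCD G) (t : Fin D.n) : Prop := t ≠ D.root ∧ D.adh t ≤ 2

/-- A tree-cut decomposition is nice if for every thin node `t`, `N(Y_t)` avoids the
sets `Y_b` of all siblings `b` of `t`. -/
def TCD.IsNice (D : TCD G) : Prop :=
  ∀ t : Fin D.n, D.IsThin t →
    ∀ p b : Fin D.n, t ∈ D.children p → b ∈ D.children p → b ≠ t →
      ∀ v ∈ nbhd G (D.Y t), v ∉ D.Y b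

/-- `B_t`: the thin children `b` of `t` with `|N(Y_b)| ≤ 2` and `N(Y_b) ⊆ X_t`. -/
def TCD.B (D : TCD G) (t : Fin D.n) : Finset (Fin D.n) :=
  (D.children t).filter fun b => (nbhd G (D.Y b)).card ≤ 2 ∧ nbhd G (D.Y b) ⊆ D.bag t

/-- `B_t^{(2)}`: the members of `B_t` of adhesion exactly 2. -/
def TCD.B2 (D : TCD G) (t : Fin D.n) : Finset (Fin D.n) :=
  (D.B t).filter fun b => D.adh b = 2

end PaperSTCW

/-! Deleting edges keeps every tree-cut decomposition (same tree, same bags) and can only shrink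
adhesions and torso edge multisets. The 2-center shrinks with the edge multiset because the
peeling `reduce X d false S E` is confluent: it computes the largest `R ⊆ S` in which every
vertex outside `X` has degree `> d` once the vertices of `S \ R` and their edges are gone, and
such an `R` for fewer edges is also one for more edges. -/

namespace PaperSTCW

section Peeling

variable {W : Type}

lemma mdeg_mono {E' E : Multiset (Sym2 W)} (h : E' ≤ E) (v : W) : mdeg E' v ≤ mdeg E v := by
  obtain ⟨F, hF⟩ := Multiset.le_iff_exists_add.mp (Multiset.map_le_map
    (f := fun e => if e = Sym2.diag v then 2 else if v ∈ e then 1 else 0) h)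
  simp only [mdeg, hF, Multiset.sum_add, Nat.le_add_right]

def edgesAvoiding (D : Finset W) (E : Multiset (Sym2 W)) : Multiset (Sym2 W) :=
  E.filter fun e => ∀ w ∈ e, w ∉ D

lemma edgesAvoiding_le (D : Finset W) (E : Multiset (Sym2 W)) : edgesAvoiding D E ≤ E :=
  Multiset.filter_le _ _

lemma edgesAvoiding_mono {E' E : Multiset (Sym2 W)} (h : E' ≤ E) (D : Finset W) :
    edgesAvoiding D E' ≤ edgesAvoiding D E :=
  Multiset.filter_le_filter _ h

def IsPeelStable (X : Finset W) (d : ℕ) (S R : Finset W) (E : Multiset (Sym2 W)) : Prop :=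
  R ⊆ S ∧ ∀ v ∈ R, v ∉ X → d < mdeg (edgesAvoiding (S \ R) E) v

lemma IsPeelStable.mono_edges {X : Finset W} {d : ℕ} {S R : Finset W}
    {E' E : Multiset (Sym2 W)} (hR : IsPeelStable X d S R E') (h : E' ≤ E) :
    IsPeelStable X d S R E :=
  ⟨hR.1, fun v hv hvX => (hR.2 v hv hvX).trans_le (mdeg_mono (edgesAvoiding_mono h _) v)⟩

lemma nextE_false (v : W) (E : Multiset (Sym2 W)) :
    nextE false v E = E.filter fun e => v ∉ e := by
  simp [nextE]

lemma edgesAvoiding_nextE_false {S R : Finset W} {u : W} (hu : u ∈ S) (huR : u ∉ R)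
    (E : Multiset (Sym2 W)) :
    edgesAvoiding (S.erase u \ R) (nextE false u E) = edgesAvoiding (S \ R) E := by
  have hSR : ∀ w, w ∈ S \ R ↔ w = u ∨ w ∈ S.erase u \ R := by
    intro w
    by_cases hw : w = u
    · subst hw; simp [hu, huR]
    · simp [hw]
  simp only [edgesAvoiding, nextE_false, Multiset.filter_filter, hSR]
  exact Multiset.filter_congr fun e _ =>
    ⟨fun ⟨h, hu⟩ w hw => not_or.mpr ⟨fun hwu => hu (hwu ▸ hw), h w hw⟩,
      fun h => ⟨fun w hw => (not_or.mp (h w hw)).2, fun hu' => (not_or.mp (h u hu')).1 rfl⟩⟩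

lemma reduce_subset (X : Finset W) (d : ℕ) (lift : Bool) (S : Finset W)
    (E : Multiset (Sym2 W)) : reduce X d lift S E ⊆ S := by
  rw [reduce]
  split
  · next h => exact (reduce_subset X d lift _ _).trans (Finset.erase_subset _ _)
  · exact subset_rfl
termination_by S.card
decreasing_by exact Finset.card_erase_lt_of_mem ‹∃ v, v ∈ S ∧ _›.choose_spec.1

lemma isPeelStable_reduce (X : Finset W) (d : ℕ) (S : Finset W) (E : Multiset (Sym2 W)) :
    IsPeelStable X d S (reduce X d false S E) E := by
  refine ⟨reduce_subset X d false S E, ?_⟩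
  rw [reduce]
  split
  · next h =>
    obtain ⟨hu, -, -⟩ := h.choose_spec
    have huR : h.choose ∉ reduce X d false (S.erase h.choose) (nextE false h.choose E) :=
      fun hmem => Finset.notMem_erase _ _ (reduce_subset _ _ _ _ _ hmem)
    rw [← edgesAvoiding_nextE_false hu huR]
    exact (isPeelStable_reduce X d _ _).2
  · next h =>
    simp only [not_exists, not_and, not_le] at h
    simpa [edgesAvoiding] using h
termination_by S.card
decreasing_by exact Finset.card_erase_lt_of_mem ‹∃ v, v ∈ S ∧ _›.choose_spec.1

lemma IsPeelStable.subset_reduce {X : Finset W} {d : ℕ} {S R : Finset W}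
    {E : Multiset (Sym2 W)} (hR : IsPeelStable X d S R E) : R ⊆ reduce X d false S E := by
  rw [reduce]
  split
  · next h =>
    obtain ⟨hu, huX, hud⟩ := h.choose_spec
    have huR : h.choose ∉ R := fun huR =>
      (hR.2 _ huR huX).not_ge ((mdeg_mono (edgesAvoiding_le _ _) _).trans hud)
    refine IsPeelStable.subset_reduce ⟨fun v hv => Finset.mem_erase.mpr
      ⟨fun hvu => huR (hvu ▸ hv), hR.1 hv⟩, ?_⟩
    rw [edgesAvoiding_nextE_false hu huR]
    exact hR.2
  · exact hR.1
termination_by S.card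
decreasing_by exact Finset.card_erase_lt_of_mem ‹∃ v, v ∈ S ∧ _›.choose_spec.1

lemma reduce_mono {X : Finset W} {d : ℕ} {S : Finset W} {E' E : Multiset (Sym2 W)}
    (h : E' ≤ E) : reduce X d false S E' ⊆ reduce X d false S E :=
  ((isPeelStable_reduce X d S E').mono_edges h).subset_reduce

end Peeling

section Decompositions

variable {V : Type} [Fintype V] {G H : SimpleGraph V}

/-- The fields of a tree-cut decomposition do not mention the graph. -/
def TCD.transfer (D : TCD G) (H : SimpleGraph V) : TCD H :=
  ⟨D.n, D.T, D.tree, D.root, D.bag, D.partition⟩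

def TCD.trivial (G : SimpleGraph V) : TCD G where
  n := 1
  T := ⊥
  tree := .of_subsingleton
  root := 0
  bag := fun _ => Finset.univ
  partition := fun v => ⟨0, Finset.mem_univ v, fun t _ => Subsingleton.elim t 0⟩

lemma TCD.adh_transfer_le (D : TCD G) (h : H ≤ G) (t : Fin D.n) :
    (D.transfer H).adh t ≤ D.adh t :=
  Finset.card_le_card <| Finset.monotone_filter_right _ fun _ _ he =>
    ⟨SimpleGraph.edgeSet_mono h he.1, he.2⟩

lemma TCD.torsoE_transfer_le (D : TCD G) (h : H ≤ G) (t : Fin D.n) :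
    (D.transfer H).torsoE t ≤ D.torsoE t :=
  Multiset.filter_le_filter _ <| Multiset.map_le_map <| Finset.val_le_iff.mpr <|
    Finset.monotone_filter_right _ fun _ _ he => SimpleGraph.edgeSet_mono h he

lemma TCD.tor2_transfer_le (D : TCD G) (h : H ≤ G) (t : Fin D.n) :
    (D.transfer H).tor2 t ≤ D.tor2 t :=
  Finset.card_le_card (reduce_mono (D.torsoE_transfer_le h t))

lemma TCD.slimWidth_transfer_le (D : TCD G) (h : H ≤ G) :
    (D.transfer H).slimWidth ≤ D.slimWidth :=
  Finset.sup_mono_fun fun t _ => max_le_max (D.adh_transfer_le h t) (D.tor2_transfer_le h t)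

lemma stcw_mono (h : H ≤ G) : stcw H ≤ stcw G := by
  obtain ⟨D, hD⟩ := Nat.sInf_mem (s := {k | ∃ D : TCD G, D.slimWidth ≤ k})
    ⟨_, TCD.trivial G, le_rfl⟩
  exact Nat.sInf_le ⟨D.transfer H, (D.slimWidth_transfer_le h).trans hD⟩

end Decompositions

theorem stmt3_general {V : Type} [Fintype V] (G : SimpleGraph V) (e : Sym2 V) :
    stcw (G.deleteEdges {e}) ≤ stcw G :=
  stcw_mono (G.deleteEdges_le _)

/-- deleting an edge does not increase slim tree-cut width. -/
theorem stmt3 {V : Type} [Fintype V] (G : SimpleGraph V) (e : Sym2 V)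
    (he : e ∈ G.edgeSet) : stcw (G.deleteEdges {e}) ≤ stcw G :=
  stmt3_general G e

end PaperSTCW
end
end

section
/- If G is a graph with tcw_0(G) = k, then every vertex of G has degree at most k^2. -/
open scoped Classical

noncomputable section

/-!
Take a decomposition of 0-width at most `k` and the node `t` whose bag contains `v`. In the
torso at `t`, every neighbour of `v` is sent to a vertex adjacent to `v`; these vertices survive
the deletion of isolated vertices, so there are fewer than `k` of them. A torso vertex coming
from the bag of `t` is the image of one neighbour only. The neighbours sent to a component `C`
of `T - t` are joined to `v` by edges that all cross the adhesion of a single node (`t` itself if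
`C` contains the root, the child of `t` in `C` otherwise), so there are at most `k` of them.
Hence `deg v ≤ (k - 1) k ≤ k²`.
-/

namespace SimpleGraph

variable {α : Type*} {T : SimpleGraph α}

lemma Reachable.exists_walk_avoiding_of_induce {t a b : α} {ha : a ≠ t} {hb : b ≠ t}
    (h : (T.induce {s | s ≠ t}).Reachable ⟨a, ha⟩ ⟨b, hb⟩) :
    ∃ c : T.Walk a b, t ∉ c.support := by
  obtain ⟨p⟩ := h
  let c := p.map (Embedding.induce {s | s ≠ t}).toHom
  have hc : t ∉ c.support := by
    simp only [c, Walk.support_map, List.mem_map, not_exists, not_and]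
    exact fun x _ hx => x.2 hx
  exact ⟨c, hc⟩

lemma IsAcyclic.eq_of_adj_of_walk_avoiding (hT : T.IsAcyclic) {t q q' : α}
    (hq : T.Adj t q) (hq' : T.Adj t q') (p : T.Walk q' q) (htp : t ∉ p.support) : q' = q := by
  have hbridge := isBridge_iff_forall_walk_mem_edges.1 (isAcyclic_iff_forall_adj_isBridge.1 hT hq)
  have hmem := hbridge (Walk.cons hq' p)
  rw [Walk.edges_cons, List.mem_cons] at hmem
  rcases hmem with he | he
  · exact (Sym2.congr_right.1 he).symm
  · exact absurd (p.fst_mem_support_of_mem_edges he) htp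

lemma Walk.IsPath.exists_adj_after [DecidableEq α] {a b t : α} {p : T.Walk a b} (hp : p.IsPath)
    (ht : t ∈ p.support) (htb : t ≠ b) :
    ∃ q, T.Adj t q ∧ (∃ e : T.Walk q b, t ∉ e.support) ∧ q ∈ p.support ∧
      q ∉ (p.takeUntil t ht).support := by
  obtain ⟨q, hq, e, he⟩ := Walk.exists_eq_cons_of_ne htb (p.dropUntil t ht)
  have hdrop := hp.dropUntil ht
  rw [he, Walk.cons_isPath_iff] at hdrop
  have hq_drop : q ∈ (p.dropUntil t ht).support.tail := by
    rw [he, Walk.support_cons]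
    exact e.start_mem_support
  have hnodup := hp.support_nodup
  rw [← p.take_spec ht, Walk.support_append] at hnodup
  refine ⟨q, hq, ⟨e, hdrop.2⟩, ?_, fun hq_take => ?_⟩
  · rw [← p.take_spec ht, Walk.mem_support_append_iff]
    exact Or.inr (List.mem_of_mem_tail hq_drop)
  · exact List.disjoint_of_nodup_append hnodup hq_take hq_drop

end SimpleGraph

namespace PaperSTCW

open SimpleGraph Finset

section Reduce

variable {W : Type}

lemma one_le_mdeg {E : Multiset (Sym2 W)} {e : Sym2 W} {u : W} (he : e ∈ E) (hu : u ∈ e) :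
    1 ≤ mdeg E u := by
  unfold mdeg
  refine le_trans ?_ (Multiset.le_sum_of_mem (Multiset.mem_map_of_mem _ he))
  split_ifs <;> simp_all

lemma mem_reduce_zero {X S : Finset W} {E : Multiset (Sym2 W)} {w : W} (hw : w ∈ S)
    (hwX : w ∈ X ∨ ∃ x ∈ X, s(x, w) ∈ E) : w ∈ reduce X 0 false S E := by
  induction S, E using reduce.induct X 0 false with
  | case1 S E h ih =>
    obtain ⟨huS, huX, hdeg⟩ := h.choose_spec
    have hwu : w ≠ h.choose := by
      rintro rfl
      rcases hwX with hwX | ⟨x, -, hx⟩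
      · exact huX hwX
      · have := one_le_mdeg hx (Sym2.mem_mk_right x _)
        omega
    rw [reduce, dif_pos h]
    refine ih (mem_erase.2 ⟨hwu, hw⟩) (hwX.imp_right ?_)
    rintro ⟨x, hxX, hx⟩
    have hxu : x ≠ h.choose := fun hxu => huX (hxu ▸ hxX)
    refine ⟨x, hxX, ?_⟩
    simp only [nextE, Bool.false_eq_true, if_false, add_zero, Multiset.mem_filter, Sym2.mem_iff]
    exact ⟨hx, by rintro (e | e); exacts [hxu e.symm, hwu e.symm]⟩
  | case2 S E h =>
    rwa [reduce, dif_neg h]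

end Reduce

variable {V : Type} [Fintype V] {G : SimpleGraph V}

namespace TCD

lemma mem_desc_of_walk_avoiding (D : TCD G) {t s r : Fin D.n} (hs : s ∈ D.desc t)
    (c : D.T.Walk s r) (htc : t ∉ c.support) : r ∈ D.desc t := by
  intro w
  have h := hs (w.append c.reverse)
  rw [Walk.mem_support_append_iff, Walk.support_reverse, List.mem_reverse] at h
  exact h.resolve_right htc

lemma mem_Y_iff (D : TCD G) (q : Fin D.n) {u : V} {r : Fin D.n} (hur : u ∈ D.bag r) :
    u ∈ D.Y q ↔ r ∈ D.desc q := by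
  obtain ⟨r', -, hr'⟩ := D.partition u
  simp only [TCD.Y, mem_filter, mem_univ, true_and]
  constructor
  · rintro ⟨s, hs, hus⟩
    rwa [hr' r hur, ← hr' s hus]
  · exact fun hr => ⟨r, hr, hur⟩

/-- `q` is `t` itself when the component of `r₀` in `T - t` lies outside the subtree of `t`, and
otherwise the child of `t` in that component. -/
lemma exists_separating_node (D : TCD G) {t r₀ : Fin D.n} (hr₀ : r₀ ≠ t) :
    ∃ q, ∀ r, (∃ c : D.T.Walk r₀ r, t ∉ c.support) → (r ∈ D.desc q ↔ t ∉ D.desc q) := by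
  by_cases hr₀t : r₀ ∈ D.desc t
  swap
  · refine ⟨t, fun r ⟨c, hc⟩ => iff_of_false (fun hr => hr₀t ?_) (not_not.2 (·.end_mem_support))⟩
    exact D.mem_desc_of_walk_avoiding hr c.reverse (by simpa using hc)
  obtain ⟨P⟩ := D.tree.connected.preconnected D.root r₀
  have hP := P.bypass_isPath
  have htP : t ∈ P.bypass.support := hr₀t _
  obtain ⟨q, hq, ⟨d, htd⟩, -, hq_take⟩ := hP.exists_adj_after htP hr₀.symm
  refine ⟨q, fun r ⟨c, htc⟩ => iff_of_true (fun w => ?_) fun htq => hq_take (htq _)⟩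
  have hrt : r ≠ t := fun hrt => htc (hrt ▸ c.end_mem_support)
  have hw := w.bypass_isPath
  obtain ⟨q', hq', ⟨e, hte⟩, hq'w, -⟩ :=
    hw.exists_adj_after (D.mem_desc_of_walk_avoiding hr₀t c htc _) hrt.symm
  have hq'q : q' = q := by
    refine D.tree.isAcyclic.eq_of_adj_of_walk_avoiding hq hq'
      (e.append (c.reverse.append d.reverse)) ?_
    simp only [Walk.mem_support_append_iff, Walk.support_reverse, List.mem_reverse]
    tauto
  exact w.support_bypass_subset_support (hq'q ▸ hq'w)

lemma card_le_adh (D : TCD G) (q : Fin D.n) {v : V} {U : Finset V}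
    (hU : ∀ u ∈ U, G.Adj v u ∧ (u ∈ D.Y q ↔ v ∉ D.Y q)) : U.card ≤ D.adh q := by
  refine card_le_card_of_injOn (fun u => s(v, u)) (fun u hu => ?_)
    fun _ _ _ _ h => Sym2.congr_right.1 h
  obtain ⟨hadj, hcut⟩ := hU u hu
  simp only [coe_filter, mem_univ, true_and, Set.mem_ofPred_eq]
  refine ⟨hadj, ?_⟩
  by_cases hv : v ∈ D.Y q
  · exact ⟨v, u, rfl, hv, hcut.not.2 (not_not.2 hv)⟩
  · exact ⟨u, v, Sym2.eq_swap, hcut.2 hv, hv⟩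

lemma toTorso_eq_inl_iff (D : TCD G) (t : Fin D.n) (u w : V) :
    D.toTorso t u = Sum.inl w ↔ u = w ∧ u ∈ D.bag t := by
  obtain ⟨r, hr, hr_uniq⟩ := D.partition u
  unfold toTorso
  split_ifs with h
  · obtain ⟨s, hst, hs⟩ := h
    simp only [false_iff, not_and]
    exact fun _ hut => hst ((hr_uniq s hs).trans (hr_uniq t hut).symm)
  · simp only [Sum.inl.injEq, iff_self_and]
    rintro -
    by_contra hut
    exact h ⟨r, fun hrt => hut (hrt ▸ hr), hr⟩

lemma toTorso_eq_inr (D : TCD G) {t : Fin D.n} {u : V} {C : D.Cmp t}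
    (h : D.toTorso t u = Sum.inr C) :
    ∃ s, ∃ hs : s ≠ t, u ∈ D.bag s ∧
      (D.T.induce {s | s ≠ t}).connectedComponentMk ⟨s, hs⟩ = C := by
  unfold toTorso at h
  split_ifs at h with hex
  exact ⟨_, hex.choose_spec.1, hex.choose_spec.2, Sum.inr.inj h⟩

lemma toTorso_mem_torsoS (D : TCD G) (t : Fin D.n) (u : V) : D.toTorso t u ∈ D.torsoS t := by
  unfold torsoS
  cases h : D.toTorso t u with
  | inl w =>
    obtain ⟨rfl, hu⟩ := (D.toTorso_eq_inl_iff t u w).1 h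
    exact mem_union_left _ (mem_image_of_mem _ hu)
  | inr C => exact mem_union_right _ (mem_image_of_mem _ (mem_univ C))

lemma map_mem_torsoE (D : TCD G) (t : Fin D.n) {a b : V} (hab : G.Adj a b)
    (hne : D.toTorso t a ≠ D.toTorso t b) : s(D.toTorso t a, D.toTorso t b) ∈ D.torsoE t := by
  simp only [torsoE, Multiset.mem_filter, Multiset.mem_map, mem_val, mem_filter, mem_univ,
    true_and, Sym2.mk_isDiag_iff]
  exact ⟨⟨s(a, b), hab, rfl⟩, hne⟩

/-- Together with `v`, the images of its neighbours survive the deletion of isolated vertices. -/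
lemma card_image_toTorso_lt_tor1 (D : TCD G) {t : Fin D.n} {v : V} (hv : v ∈ D.bag t) :
    ((G.neighborFinset v).image (D.toTorso t)).card < D.tor1 t := by
  have hvv : D.toTorso t v = Sum.inl v := (D.toTorso_eq_inl_iff t v v).2 ⟨rfl, hv⟩
  have hvX : (Sum.inl v : V ⊕ D.Cmp t) ∈ (D.bag t).image Sum.inl := mem_image_of_mem _ hv
  have hsub : insert (Sum.inl v : V ⊕ D.Cmp t) ((G.neighborFinset v).image (D.toTorso t)) ⊆
      reduce ((D.bag t).image Sum.inl) 0 false (D.torsoS t) (D.torsoE t) := by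
    refine insert_subset (mem_reduce_zero (hvv ▸ D.toTorso_mem_torsoS t v) (Or.inl hvX)) ?_
    intro b hb
    obtain ⟨u, hu, rfl⟩ := mem_image.1 hb
    have hadj := (G.mem_neighborFinset v u).1 hu
    have hne : D.toTorso t v ≠ D.toTorso t u := fun h =>
      hadj.ne ((D.toTorso_eq_inl_iff t u v).1 (hvv ▸ h).symm).1.symm
    exact mem_reduce_zero (D.toTorso_mem_torsoS t u)
      (Or.inr ⟨_, hvX, hvv ▸ D.map_mem_torsoE t hadj hne⟩)
  have hvB : Sum.inl v ∉ (G.neighborFinset v).image (D.toTorso t) := by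
    rintro hb
    obtain ⟨u, hu, h⟩ := mem_image.1 hb
    exact (G.mem_neighborFinset v u).1 hu |>.ne ((D.toTorso_eq_inl_iff t u v).1 h).1.symm
  have := card_le_card hsub
  rwa [card_insert_of_notMem hvB] at this

lemma card_fiber_toTorso_inr_le (D : TCD G) {t : Fin D.n} {v : V} (hv : v ∈ D.bag t)
    (C : D.Cmp t) :
    ∃ q, ((G.neighborFinset v).filter fun u => D.toTorso t u = Sum.inr C).card ≤ D.adh q := by
  induction C using ConnectedComponent.ind with
  | h r₀ =>
  obtain ⟨q, hq⟩ := D.exists_separating_node r₀.2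
  refine ⟨q, D.card_le_adh q (v := v) fun u hu => ?_⟩
  obtain ⟨hu, hC⟩ := mem_filter.1 hu
  obtain ⟨s, hs, hus, hsC⟩ := D.toTorso_eq_inr hC
  obtain ⟨c, hc⟩ := Reachable.exists_walk_avoiding_of_induce (ConnectedComponent.eq.1 hsC.symm)
  rw [D.mem_Y_iff q hus, D.mem_Y_iff q hv]
  exact ⟨(G.mem_neighborFinset v u).1 hu, hq s ⟨c, hc⟩⟩

lemma adh_le_zeroWidth (D : TCD G) (t : Fin D.n) : D.adh t ≤ D.zeroWidth :=
  (le_max_left _ _).trans (le_sup (f := fun t => max (D.adh t) (D.tor1 t)) (mem_univ t))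

lemma tor1_le_zeroWidth (D : TCD G) (t : Fin D.n) : D.tor1 t ≤ D.zeroWidth :=
  (le_max_right _ _).trans (le_sup (f := fun t => max (D.adh t) (D.tor1 t)) (mem_univ t))

lemma card_fiber_toTorso_le_zeroWidth (D : TCD G) {t : Fin D.n} {v : V} (hv : v ∈ D.bag t)
    (b : V ⊕ D.Cmp t) :
    ((G.neighborFinset v).filter fun u => D.toTorso t u = b).card ≤ D.zeroWidth := by
  cases b with
  | inl w =>
    have hsub : (G.neighborFinset v).filter (fun u => D.toTorso t u = Sum.inl w) ⊆ {w} :=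
      fun u hu => mem_singleton.2 ((D.toTorso_eq_inl_iff t u w).1 (mem_filter.1 hu).2).1
    calc _ ≤ 1 := (card_le_card hsub).trans (card_singleton w).le
      _ ≤ D.tor1 t := Nat.one_le_of_lt (D.card_image_toTorso_lt_tor1 hv)
      _ ≤ D.zeroWidth := D.tor1_le_zeroWidth t
  | inr C =>
    obtain ⟨q, hq⟩ := D.card_fiber_toTorso_inr_le hv C
    exact hq.trans (D.adh_le_zeroWidth q)

lemma degree_le_zeroWidth_sq (D : TCD G) (v : V) : G.degree v ≤ D.zeroWidth ^ 2 := by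
  obtain ⟨t, hv, -⟩ := D.partition v
  calc G.degree v ≤ D.zeroWidth * ((G.neighborFinset v).image (D.toTorso t)).card :=
        card_le_mul_card_image _ _ fun b _ => D.card_fiber_toTorso_le_zeroWidth hv b
    _ ≤ D.zeroWidth * D.zeroWidth :=
        Nat.mul_le_mul_left _ ((D.card_image_toTorso_lt_tor1 hv).le.trans (D.tor1_le_zeroWidth t))
    _ = D.zeroWidth ^ 2 := (sq _).symm

def single (G : SimpleGraph V) : TCD G where
  n := 1
  T := ⊥
  tree := .of_subsingleton
  root := 0
  bag := fun _ => univ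
  partition := fun v => ⟨0, mem_univ v, fun _ _ => Subsingleton.elim _ _⟩

lemma exists_zeroWidth_le_tcw0 (G : SimpleGraph V) : ∃ D : TCD G, D.zeroWidth ≤ tcw0 G := by
  have hne : {k | ∃ D : TCD G, D.zeroWidth ≤ k}.Nonempty := ⟨_, single G, le_rfl⟩
  exact Nat.sInf_mem hne

end TCD

/-- if `tcw₀(G) = k` then every vertex of `G` has degree at most `k²`. -/
theorem stmt9 {V : Type} [Fintype V] (G : SimpleGraph V) (k : ℕ) (h : tcw0 G = k) :
    ∀ v : V, G.degree v ≤ k ^ 2 := by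
  intro v
  obtain ⟨D, hD⟩ := TCD.exists_zeroWidth_le_tcw0 G
  calc G.degree v ≤ D.zeroWidth ^ 2 := D.degree_le_zeroWidth_sq v
    _ ≤ k ^ 2 := Nat.pow_le_pow_left (h ▸ hD) 2
end PaperSTCW
end
end
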